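/- arXiv:1803.01019 — 2 statements merged into one kernel-verified Lean document; each statement's English description precedes it below -/
import Mathlib

section
/- Let w, e : [-π,π] → ℝ be continuously differentiable 2π-periodic functions with ||w||_{W^{1,∞}} ≤ M and |e(x)| ≤ 1 for all x, and q ≥ 1 an integer. Then |∫_{-π}^{π} R(w,-e)(x) e(x) dx| ≤ C(q, M) ∫_{-π}^{π} e(x)² dx, where R(v,u) = (1/(q+1)) ∂_x( Σ_{j=1}^{q} binom(q+1,j) v^{q+1-j} u^j ) and C(q,M) depends only on q and M. -/
/-!
With `u = -e` and `F = binom(q+1, j) w^(q+1-j)`, the `j`-th summand of `R(w,-e) e` is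
`-(F u^j)' u / (q+1)`. The pointwise identity `(j+1) (F u^j)' u = F' u^(j+1) + j (F u^(j+1))'`
and the vanishing of `∫ (F u^(j+1))'` over a period give `(j+1) ∫ (F u^j)' u = ∫ F' u^(j+1)`.
Since `j ≥ 1` and `|u| ≤ 1`, `|u|^(j+1) ≤ u^2`, so the summand is controlled by
`sup |F'| ∫ e^2`, and `|F'| ≤ binom(q+1, j) (q+1-j) M^(q+1-j)`.
-/

open Real intervalIntegral

theorem integral_deriv_eq_zero_of_periodic {f : ℝ → ℝ} {a b : ℝ} (hf : ContDiff ℝ 1 f)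
    (hp : Function.Periodic f (b - a)) : ∫ x in a..b, deriv f x = 0 := by
  rw [integral_deriv_eq_sub (fun x _ => hf.differentiable one_ne_zero x)
    ((hf.continuous_deriv le_rfl).intervalIntegrable _ _), sub_eq_zero, ← hp a, add_sub_cancel]

theorem add_one_mul_deriv_mul_pow_mul {F u : ℝ → ℝ} {x : ℝ} (hF : DifferentiableAt ℝ F x)
    (hu : DifferentiableAt ℝ u x) (j : ℕ) :
    (j + 1) * (deriv (fun y => F y * u y ^ j) x * u x)
      = deriv F x * u x ^ (j + 1) + j * deriv (fun y => F y * u y ^ (j + 1)) x := by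
  rw [(hF.hasDerivAt.fun_mul (hu.hasDerivAt.fun_pow j)).deriv,
    (hF.hasDerivAt.fun_mul (hu.hasDerivAt.fun_pow (j + 1))).deriv]
  cases j with
  | zero => simp
  | succ k => simp only [Nat.add_sub_cancel]; push_cast; ring

theorem add_one_mul_integral_deriv_mul_pow_mul_of_periodic {F u : ℝ → ℝ} {a b : ℝ}
    (hF : ContDiff ℝ 1 F) (hu : ContDiff ℝ 1 u) (hpF : Function.Periodic F (b - a))
    (hpu : Function.Periodic u (b - a)) (j : ℕ) :
    (j + 1) * ∫ x in a..b, deriv (fun y => F y * u y ^ j) x * u x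
      = ∫ x in a..b, deriv F x * u x ^ (j + 1) := by
  have hFu : ContDiff ℝ 1 (fun y => F y * u y ^ (j + 1)) := hF.mul (hu.pow _)
  rw [← integral_const_mul, integral_congr fun x _ => add_one_mul_deriv_mul_pow_mul
      (hF.differentiable one_ne_zero x) (hu.differentiable one_ne_zero x) j,
    integral_add
      (((hF.continuous_deriv le_rfl).fun_mul (hu.continuous.fun_pow _)).intervalIntegrable _ _)
      ((continuous_const.fun_mul (hFu.continuous_deriv le_rfl)).intervalIntegrable _ _),
    integral_const_mul,
    integral_deriv_eq_zero_of_periodic hFu (hpF.mul (hpu.comp (· ^ (j + 1)))), mul_zero, add_zero]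

theorem abs_integral_deriv_mul_pow_mul_le_of_periodic {F u : ℝ → ℝ} {a b K : ℝ}
    (hab : a ≤ b) (hF : ContDiff ℝ 1 F) (hu : ContDiff ℝ 1 u)
    (hpF : Function.Periodic F (b - a)) (hpu : Function.Periodic u (b - a))
    (hF' : ∀ x, |deriv F x| ≤ K) (hu1 : ∀ x, |u x| ≤ 1) {j : ℕ} (hj : 1 ≤ j) :
    |∫ x in a..b, deriv (fun y => F y * u y ^ j) x * u x| ≤ K * ∫ x in a..b, u x ^ 2 := by
  have hpointwise : ∀ x, |deriv F x * u x ^ (j + 1)| ≤ K * u x ^ 2 := fun x => by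
    rw [abs_mul, abs_pow, ← sq_abs (u x)]
    exact mul_le_mul (hF' x) (pow_le_pow_of_le_one (abs_nonneg _) (hu1 x) (by omega))
      (by positivity) ((abs_nonneg _).trans (hF' x))
  calc |∫ x in a..b, deriv (fun y => F y * u y ^ j) x * u x|
      ≤ (j + 1) * |∫ x in a..b, deriv (fun y => F y * u y ^ j) x * u x| :=
        le_mul_of_one_le_left (abs_nonneg _) (by linarith [(Nat.cast_nonneg j : (0 : ℝ) ≤ j)])
    _ = |∫ x in a..b, deriv F x * u x ^ (j + 1)| := by
        rw [← add_one_mul_integral_deriv_mul_pow_mul_of_periodic hF hu hpF hpu, abs_mul,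
          abs_of_nonneg (by positivity : (0 : ℝ) ≤ j + 1)]
    _ ≤ ∫ x in a..b, K * u x ^ 2 :=
        abs_integral_le_integral_abs hab |>.trans <| integral_mono_on hab
          (((hF.continuous_deriv le_rfl).fun_mul
            (hu.continuous.fun_pow _)).abs.intervalIntegrable _ _)
          ((continuous_const.mul (hu.continuous.pow 2)).intervalIntegrable _ _)
          fun x _ => hpointwise x
    _ = K * ∫ x in a..b, u x ^ 2 := integral_const_mul _ _

theorem abs_deriv_pow_le {w : ℝ → ℝ} {M : ℝ} {x : ℝ} (hw : DifferentiableAt ℝ w x)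
    (hwM : |w x| ≤ M) (hw'M : |deriv w x| ≤ M) (n : ℕ) :
    |deriv (fun y => w y ^ n) x| ≤ n * M ^ n := by
  rw [(hw.hasDerivAt.fun_pow n).deriv]
  cases n with
  | zero => simp
  | succ k =>
    rw [abs_mul, abs_mul, abs_pow, Nat.add_sub_cancel, pow_succ, Nat.abs_cast, ← mul_assoc]
    have hM : 0 ≤ M := (abs_nonneg _).trans hwM
    gcongr

theorem integral_deriv_sum_mul {ι : Type*} (s : Finset ι) {g : ι → ℝ → ℝ} {e : ℝ → ℝ}
    {a b : ℝ} (hg : ∀ i ∈ s, ContDiff ℝ 1 (g i)) (he : Continuous e) :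
    ∫ x in a..b, deriv (fun y => ∑ i ∈ s, g i y) x * e x
      = ∑ i ∈ s, ∫ x in a..b, deriv (g i) x * e x := by
  simp_rw [deriv_fun_sum fun i hi => (hg i hi).differentiable one_ne_zero _, Finset.sum_mul]
  exact integral_finsetSum fun i hi =>
    (((hg i hi).continuous_deriv le_rfl).mul he).intervalIntegrable _ _

theorem sum_Icc_choose_le (q : ℕ) :
    ∑ j ∈ Finset.Icc 1 q, ((q + 1).choose j : ℝ) ≤ 2 ^ (q + 1) := by
  have : ∑ j ∈ Finset.Icc 1 q, (q + 1).choose j ≤ 2 ^ (q + 1) :=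
    (Finset.sum_le_sum_of_subset fun j hj => by simp at hj ⊢; omega).trans
      (Nat.sum_range_choose (q + 1)).le
  exact_mod_cast this

theorem abs_integral_deriv_binomial_term_mul_le {w e : ℝ → ℝ} {a b M : ℝ} (hab : a ≤ b)
    (hw : ContDiff ℝ 1 w) (he : ContDiff ℝ 1 e) (hpw : Function.Periodic w (b - a))
    (hpe : Function.Periodic e (b - a)) (hwM : ∀ x, |w x| ≤ M) (hw'M : ∀ x, |deriv w x| ≤ M)
    (he1 : ∀ x, |e x| ≤ 1) {c : ℝ} (hc : 0 ≤ c) (n : ℕ) {j : ℕ} (hj : 1 ≤ j) :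
    |∫ x in a..b, deriv (fun y => c * w y ^ n * (-(e y)) ^ j) x * e x|
      ≤ c * (n * M ^ n) * ∫ x in a..b, e x ^ 2 := by
  have hderiv : ∀ x, |deriv (fun y => c * w y ^ n) x| ≤ c * (n * M ^ n) := fun x => by
    rw [deriv_const_mul _ ((hw.differentiable one_ne_zero x).fun_pow _), abs_mul,
      abs_of_nonneg hc]
    exact mul_le_mul_of_nonneg_left
      (abs_deriv_pow_le (hw.differentiable one_ne_zero x) (hwM x) (hw'M x) n) hc
  simpa [integral_neg] using abs_integral_deriv_mul_pow_mul_le_of_periodic hab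
    (contDiff_const.mul (hw.pow n)) he.neg (hpw.comp fun t => c * t ^ n) (hpe.comp Neg.neg)
    hderiv (fun x => (abs_neg (e x)).trans_le (he1 x)) hj

theorem sum_choose_mul_nat_mul_pow_le (q : ℕ) {M : ℝ} (hM : 0 ≤ M) :
    1 / (q + 1 : ℝ) * ∑ j ∈ Finset.Icc 1 q,
        ((q + 1).choose j : ℝ) * ((q + 1 - j : ℕ) * M ^ (q + 1 - j))
      ≤ 2 ^ (q + 1) * (M + 1) ^ (q + 1) := by
  have hterm : ∀ j ∈ Finset.Icc 1 q,
      ((q + 1).choose j : ℝ) * ((q + 1 - j : ℕ) * M ^ (q + 1 - j))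
        ≤ (q + 1).choose j * ((q + 1) * (M + 1) ^ (q + 1)) := fun j _ => by
    gcongr
    · exact_mod_cast Nat.sub_le _ _
    · exact (pow_le_pow_left₀ hM (by linarith) _).trans
        (pow_le_pow_right₀ (by linarith) (Nat.sub_le _ _))
  calc _ ≤ 1 / (q + 1 : ℝ) * ∑ j ∈ Finset.Icc 1 q,
        ((q + 1).choose j : ℝ) * ((q + 1) * (M + 1) ^ (q + 1)) :=
        mul_le_mul_of_nonneg_left (Finset.sum_le_sum hterm) (by positivity)
    _ = (∑ j ∈ Finset.Icc 1 q, ((q + 1).choose j : ℝ)) * (M + 1) ^ (q + 1) := by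
        rw [← Finset.sum_mul]; field_simp
    _ ≤ _ := by gcongr; exact sum_Icc_choose_le q

theorem benjamin_remainder_estimate_general (q : ℕ) (M : ℝ) (hM : 0 ≤ M) :
    ∃ C > 0, ∀ w e : ℝ → ℝ,
      ContDiff ℝ 1 w → ContDiff ℝ 1 e →
      Function.Periodic w (2 * π) → Function.Periodic e (2 * π) →
      (∀ x, |w x| ≤ M) → (∀ x, |deriv w x| ≤ M) → (∀ x, |e x| ≤ 1) →
      |∫ x in (-π : ℝ)..π,
          ((1 / (q + 1 : ℝ)) * deriv (fun y =>
            ∑ j ∈ Finset.Icc 1 q, ((q + 1).choose j : ℝ) * (w y) ^ (q + 1 - j) * (-(e y)) ^ j) x)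
            * e x|
        ≤ C * ∫ x in (-π : ℝ)..π, (e x) ^ 2 := by
  refine ⟨2 ^ (q + 1) * (M + 1) ^ (q + 1), by positivity, ?_⟩
  intro w e hw he hpw hpe hwM hw'M he1
  rw [show 2 * π = π - -π by ring] at hpw hpe
  have hπ : -π ≤ π := by linarith [pi_pos]
  set I := ∫ x in (-π : ℝ)..π, e x ^ 2
  calc _ = 1 / (q + 1 : ℝ) * |∑ j ∈ Finset.Icc 1 q, ∫ x in (-π : ℝ)..π, deriv (fun y =>
        ((q + 1).choose j : ℝ) * w y ^ (q + 1 - j) * (-(e y)) ^ j) x * e x| := by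
        simp only [mul_assoc (1 / ((q : ℝ) + 1))]
        rw [integral_const_mul, integral_deriv_sum_mul _ (fun j _ =>
          (contDiff_const.mul (hw.pow _)).mul (he.neg.pow _)) he.continuous, abs_mul,
          abs_of_pos (by positivity)]
    _ ≤ 1 / (q + 1 : ℝ) * ∑ j ∈ Finset.Icc 1 q,
        ((q + 1).choose j : ℝ) * ((q + 1 - j : ℕ) * M ^ (q + 1 - j)) * I := by
        gcongr
        refine (Finset.abs_sum_le_sum_abs _ _).trans (Finset.sum_le_sum fun j hj => ?_)
        exact abs_integral_deriv_binomial_term_mul_le hπ hw he hpw hpe hwM hw'M he1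
          (Nat.cast_nonneg _) _ (Finset.mem_Icc.1 hj).1
    _ ≤ 2 ^ (q + 1) * (M + 1) ^ (q + 1) * I := by
        rw [← Finset.sum_mul, ← mul_assoc]
        exact mul_le_mul_of_nonneg_right (sum_choose_mul_nat_mul_pow_le q hM)
          (integral_nonneg hπ fun x _ => sq_nonneg _)

theorem benjamin_remainder_estimate (q : ℕ) (hq : 1 ≤ q) (M : ℝ) (hM : 0 ≤ M) :
    ∃ C > 0, ∀ w e : ℝ → ℝ,
      ContDiff ℝ 1 w → ContDiff ℝ 1 e →
      Function.Periodic w (2 * π) → Function.Periodic e (2 * π) →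
      (∀ x, |w x| ≤ M) → (∀ x, |deriv w x| ≤ M) → (∀ x, |e x| ≤ 1) →
      |∫ x in (-π : ℝ)..π,
          ((1 / (q + 1 : ℝ)) * deriv (fun y =>
            ∑ j ∈ Finset.Icc 1 q, ((q + 1).choose j : ℝ) * (w y) ^ (q + 1 - j) * (-(e y)) ^ j) x)
            * e x|
        ≤ C * ∫ x in (-π : ℝ)..π, (e x) ^ 2 :=
  benjamin_remainder_estimate_general q M hM
end

section
/- Let u^N : [0,∞) → S_N satisfy the semidiscrete scheme (∂_t u^N, χ) + (-L ∂_x u^N + ∂_x f(u^N), χ) = 0 for all χ ∈ S_N. Then d/dt E_π(u^N(·,t)) = 0, where E_π(v) = ∫_{-π}^{π} ( v·Lv - 2 v^{q+2}/((q+1)(q+2)) ) dx. -/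
/-!
Write `u = u^N`, `f(u) = u^{q+1}/(q+1)` and `h = Lu - f(u)`. Since the symbol of `L` is even, `L` is
symmetric for the bilinear pairing `∫ g k`, so `E'(t) = 2 ∫ ∂ₜu · h`. As `∂ₜu ∈ S_N`, `h` may be
replaced by `w = P_N h`. Testing the scheme with the `χ ∈ S_N` for which `conj χ = w` turns
`∫ ∂ₜu · w` into `∫ w · ∂ₓh`, which in Fourier coefficients is `2π ∑ (-ik) ĥ_k ĥ_{-k}`, a sum odd
in `k`, hence zero.

The coefficients are only differentiable in time, so domination arguments for differentiating under
the integral sign are unavailable; instead `u(t)` is viewed as a differentiable curve in the Banach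
algebra `ℝ →ᵇ ℂ`, on which the energy density is a polynomial and the integral a continuous linear
functional.
-/

open Real MeasureTheory Complex ComplexConjugate
open scoped BoundedContinuousFunction

/-- The elements of `S_N`, evaluated at complex points as well because the scheme differentiates
the nonlinearity with the complex `deriv`. -/
noncomputable def trigPoly (N : ℕ) (a : ℤ → ℂ) (z : ℂ) : ℂ :=
  ∑ k ∈ Finset.Icc (-(N : ℤ)) N, a k * exp (I * k * z)

theorem neg_mem_Icc_neg_iff {N : ℕ} {k : ℤ} :
    -k ∈ Finset.Icc (-(N : ℤ)) N ↔ k ∈ Finset.Icc (-(N : ℤ)) N := by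
  simp only [Finset.mem_Icc]; omega

theorem sum_Icc_neg {M : Type*} [AddCommMonoid M] (N : ℕ) (f : ℤ → M) :
    ∑ k ∈ Finset.Icc (-(N : ℤ)) N, f (-k) = ∑ k ∈ Finset.Icc (-(N : ℤ)) N, f k :=
  Finset.sum_equiv (Equiv.neg ℤ) (fun _ => neg_mem_Icc_neg_iff.symm) fun _ _ => rfl

theorem sum_Icc_eq_zero_of_odd {R : Type*} [NonAssocRing R] [NoZeroDivisors R] [CharZero R]
    (N : ℕ) {f : ℤ → R} (hf : ∀ k, f (-k) = -f k) :
    ∑ k ∈ Finset.Icc (-(N : ℤ)) N, f k = 0 := by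
  have h := sum_Icc_neg N f
  simp only [hf, Finset.sum_neg_distrib] at h
  exact CharZero.eq_neg_self_iff.mp h.symm

theorem hasDerivAt_exp_I_int_mul (k : ℤ) (z : ℂ) :
    HasDerivAt (fun w => exp (I * k * w)) (I * k * exp (I * k * z)) z := by
  simpa [mul_comm] using ((hasDerivAt_id z).const_mul (I * k)).cexp

theorem integral_exp_I_int_mul (k : ℤ) :
    ∫ x in (-π)..π, exp (I * k * x) = if k = 0 then 2 * (π : ℂ) else 0 := by
  split_ifs with hk
  · simp only [hk, Int.cast_zero, mul_zero, zero_mul, Complex.exp_zero,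
      intervalIntegral.integral_const, sub_neg_eq_add, real_smul, ofReal_add, mul_one]
    ring
  · have hk' : I * k ≠ 0 := by simpa only [ne_eq, mul_eq_zero, I_ne_zero, Int.cast_eq_zero,
      false_or] using hk
    rw [integral_exp_mul_complex hk', div_eq_zero_iff, sub_eq_zero,
      Complex.exp_eq_exp_iff_exists_int]
    exact Or.inl ⟨k, by push_cast; ring⟩

theorem hasDerivAt_trigPoly (N : ℕ) (a : ℤ → ℂ) (z : ℂ) :
    HasDerivAt (trigPoly N a) (trigPoly N (fun k => I * k * a k) z) z := by
  exact (HasDerivAt.fun_sum fun k _ => (hasDerivAt_exp_I_int_mul k z).const_mul (a k)).congr_deriv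
    (Finset.sum_congr rfl fun k _ => by ring)

@[fun_prop]
theorem continuous_trigPoly (N : ℕ) (a : ℤ → ℂ) : Continuous (trigPoly N a) :=
  continuous_iff_continuousAt.2 fun z => (hasDerivAt_trigPoly N a z).continuousAt

theorem trigPoly_neg_pi (N : ℕ) (a : ℤ → ℂ) : trigPoly N a (-π : ℝ) = trigPoly N a π := by
  refine Finset.sum_congr rfl fun k _ => congrArg _ ?_
  rw [Complex.exp_eq_exp_iff_exists_int]
  exact ⟨-k, by push_cast; ring⟩

theorem conj_trigPoly (N : ℕ) (a : ℤ → ℂ) (x : ℝ) :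
    conj (trigPoly N a x) = trigPoly N (fun k => conj (a (-k))) x := by
  rw [trigPoly, map_sum, ← sum_Icc_neg]
  refine Finset.sum_congr rfl fun k _ => ?_
  rw [map_mul, ← Complex.exp_conj]
  congr 2
  simp only [Int.cast_neg, mul_neg, neg_mul, map_neg, map_mul, conj_I, map_intCast, conj_ofReal,
    neg_neg]

theorem exists_conj_trigPoly_eq (N : ℕ) (b : ℤ → ℂ) :
    ∃ d : ℤ → ℂ, (∀ k : ℤ, (N : ℤ) < |k| → d k = 0) ∧
      ∀ x : ℝ, conj (trigPoly N d x) = trigPoly N b x := by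
  refine ⟨fun k => if k ∈ Finset.Icc (-(N : ℤ)) N then conj (b (-k)) else 0,
    fun k hk => if_neg ?_, fun x => ?_⟩
  · rw [Finset.mem_Icc]; rcases lt_abs.1 hk with hk | hk <;> omega
  · rw [conj_trigPoly]
    refine Finset.sum_congr rfl fun k hk => ?_
    simp only [if_pos (neg_mem_Icc_neg_iff.2 hk), neg_neg, Complex.conj_conj]

theorem hasDerivAt_trigPoly_param (N : ℕ) {c : ℝ → ℤ → ℂ} {c' : ℤ → ℂ} {t : ℝ}
    (hc : ∀ k, HasDerivAt (fun s => c s k) (c' k) t) (z : ℂ) :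
    HasDerivAt (fun s => trigPoly N (c s) z) (trigPoly N c' z) t :=
  HasDerivAt.fun_sum fun k _ => (hc k).mul_const _

theorem hasDerivAt_trigPoly_pow_div (N n : ℕ) (a : ℤ → ℂ) (z : ℂ) :
    HasDerivAt (fun y => trigPoly N a y ^ (n + 1) / (n + 1))
      (trigPoly N a z ^ n * trigPoly N (fun k => I * k * a k) z) z := by
  have hn : (n + 1 : ℂ) ≠ 0 := by exact_mod_cast n.succ_ne_zero
  refine (((hasDerivAt_trigPoly N a z).pow (n + 1)).div_const _).congr_deriv ?_
  push_cast
  field_simp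

noncomputable def fourierCoeffPi (h : ℝ → ℂ) (k : ℤ) : ℂ :=
  (2 * (π : ℂ))⁻¹ * ∫ x in (-π)..π, exp (-(I * k * x)) * h x

noncomputable def fourierProj (N : ℕ) (h : ℝ → ℂ) : ℂ → ℂ :=
  trigPoly N (fourierCoeffPi h)

theorem integral_trigPoly_mul (N : ℕ) (a : ℤ → ℂ) {h : ℝ → ℂ}
    (hh : IntervalIntegrable h volume (-π) π) :
    ∫ x in (-π)..π, trigPoly N a x * h x
      = 2 * π * ∑ k ∈ Finset.Icc (-(N : ℤ)) N, a k * fourierCoeffPi h (-k) := by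
  simp only [trigPoly, Finset.sum_mul, Finset.mul_sum, fourierCoeffPi]
  rw [intervalIntegral.integral_finsetSum (f := fun k x => a k * exp (I * k * x) * h x)
    fun k _ => hh.continuousOn_mul (g := fun x : ℝ => a k * exp (I * k * x)) (by fun_prop)]
  refine Finset.sum_congr rfl fun k _ => ?_
  have hpi : (π : ℂ) ≠ 0 := by simp [Real.pi_ne_zero]
  simp only [Int.cast_neg, mul_neg, neg_mul, neg_neg, mul_assoc,
    intervalIntegral.integral_const_mul]
  field_simp

theorem fourierCoeffPi_trigPoly {N : ℕ} {k : ℤ} (hk : k ∈ Finset.Icc (-(N : ℤ)) N)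
    (b : ℤ → ℂ) : fourierCoeffPi (fun x => trigPoly N b x) k = b k := by
  have hmode : ∀ j (x : ℝ), exp (-(I * k * x)) * (b j * exp (I * j * x))
      = b j * exp (I * ↑(j - k) * x) := fun j x => by
    rw [mul_left_comm, ← Complex.exp_add]; push_cast; ring_nf
  simp only [fourierCoeffPi, trigPoly, Finset.mul_sum, hmode]
  rw [intervalIntegral.integral_finsetSum fun j _ =>
    (Continuous.intervalIntegrable (by fun_prop) _ _)]
  simp only [intervalIntegral.integral_const_mul, integral_exp_I_int_mul, sub_eq_zero, mul_ite,
    mul_zero, Finset.sum_ite_eq', if_pos hk]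
  have hpi : (π : ℂ) ≠ 0 := by simp [Real.pi_ne_zero]
  field_simp

theorem integral_trigPoly_mul_fourierProj (N : ℕ) (a : ℤ → ℂ) {h : ℝ → ℂ}
    (hh : IntervalIntegrable h volume (-π) π) :
    ∫ x in (-π)..π, trigPoly N a x * fourierProj N h x = ∫ x in (-π)..π, trigPoly N a x * h x := by
  rw [integral_trigPoly_mul N a hh, fourierProj,
    integral_trigPoly_mul N a (Continuous.intervalIntegrable (by fun_prop) _ _)]
  refine congrArg _ (Finset.sum_congr rfl fun k hk => ?_)
  rw [fourierCoeffPi_trigPoly (neg_mem_Icc_neg_iff.2 hk)]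

theorem integral_trigPoly_mul_trigPoly (N : ℕ) (a b : ℤ → ℂ) :
    ∫ x in (-π)..π, trigPoly N a x * trigPoly N b x
      = 2 * π * ∑ k ∈ Finset.Icc (-(N : ℤ)) N, a k * b (-k) := by
  rw [integral_trigPoly_mul N a (Continuous.intervalIntegrable (by fun_prop) _ _)]
  refine congrArg _ (Finset.sum_congr rfl fun k hk => ?_)
  rw [fourierCoeffPi_trigPoly (neg_mem_Icc_neg_iff.2 hk)]

theorem integral_trigPoly_mul_multiplier_comm (N : ℕ) {l : ℤ → ℂ} (hl : ∀ k, l (-k) = l k)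
    (a b : ℤ → ℂ) :
    ∫ x in (-π)..π, trigPoly N a x * trigPoly N (fun k => l k * b k) x
      = ∫ x in (-π)..π, trigPoly N b x * trigPoly N (fun k => l k * a k) x := by
  rw [integral_trigPoly_mul_trigPoly, integral_trigPoly_mul_trigPoly, ← sum_Icc_neg N]
  simp only [neg_neg, hl]
  exact congrArg _ (Finset.sum_congr rfl fun k _ => by ring)

theorem fourierCoeffPi_deriv {h h' : ℝ → ℂ} (hh : ∀ x, HasDerivAt h (h' x) x)
    (hh' : Continuous h') (hper : h (-π) = h π) (k : ℤ) :
    fourierCoeffPi h' k = I * k * fourierCoeffPi h k := by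
  have hmode : ∀ x : ℝ, HasDerivAt (fun y : ℝ => exp (-(I * k * y)))
      (-(I * k) * exp (-(I * k * x))) x := fun x => by
    simpa [mul_comm] using ((hasDerivAt_exp_I_int_mul (-k) x).comp_ofReal)
  have hparts := intervalIntegral.integral_mul_deriv_eq_deriv_mul (a := -π) (b := π)
    (fun x _ => hmode x) (fun x _ => hh x) (Continuous.intervalIntegrable (by fun_prop) _ _)
    (hh'.intervalIntegrable _ _)
  have hend : exp (-(I * k * (-π : ℝ))) = exp (-(I * k * (π : ℝ))) := by
    rw [Complex.exp_eq_exp_iff_exists_int]; exact ⟨k, by push_cast; ring⟩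
  rw [hend, hper, sub_self, zero_sub] at hparts
  simp only [neg_mul, mul_assoc (I * k), intervalIntegral.integral_neg,
    intervalIntegral.integral_const_mul, neg_neg] at hparts
  rw [fourierCoeffPi, fourierCoeffPi, hparts]
  ring

theorem integral_fourierProj_mul_deriv (N : ℕ) {h h' : ℝ → ℂ} (hh : ∀ x, HasDerivAt h (h' x) x)
    (hh' : Continuous h') (hper : h (-π) = h π) :
    ∫ x in (-π)..π, fourierProj N h x * h' x = 0 := by
  rw [fourierProj, integral_trigPoly_mul N _ (hh'.intervalIntegrable _ _)]
  simp only [fourierCoeffPi_deriv hh hh' hper]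
  rw [sum_Icc_eq_zero_of_odd N fun k => by simp only [neg_neg]; push_cast; ring, mul_zero]

noncomputable def intervalIntegralCLM {E : Type*} [NormedAddCommGroup E] [NormedSpace ℝ E]
    (a b : ℝ) : (ℝ →ᵇ E) →L[ℝ] E :=
  LinearMap.mkContinuous
    { toFun := fun f => ∫ x in a..b, f x
      map_add' := fun f g => intervalIntegral.integral_add (f.continuous.intervalIntegrable _ _)
        (g.continuous.intervalIntegrable _ _)
      map_smul' := fun r f => intervalIntegral.integral_smul r _ }
    |b - a| fun f => by
      simpa [mul_comm] using intervalIntegral.norm_integral_le_of_norm_le_const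
        (a := a) (b := b) (f := f) fun x _ => f.norm_coe_le_norm x

theorem HasDerivAt.intervalIntegral_boundedContinuous {E : Type*} [NormedAddCommGroup E]
    [NormedSpace ℝ E] {F : ℝ → ℝ →ᵇ E} {F' : ℝ →ᵇ E} {t : ℝ} (hF : HasDerivAt F F' t)
    (a b : ℝ) : HasDerivAt (fun s => ∫ x in a..b, F s x) (∫ x in a..b, F' x) t :=
  ((intervalIntegralCLM a b).hasFDerivAt (x := F t)).comp_hasDerivAt t hF

/-- The elements of `S_N`, evaluated at complex points as well because the scheme differentiates
the nonlinearity with the complex `deriv`. -/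
noncomputable def trigPolyBCF (N : ℕ) (a : ℤ → ℂ) : ℝ →ᵇ ℂ :=
  ∑ k ∈ Finset.Icc (-(N : ℤ)) N, a k • BoundedContinuousFunction.ofNormedAddCommGroup
    (fun x : ℝ => exp (I * k * x)) (by fun_prop) 1 fun x => by
      rw [show I * k * x = ((k * x : ℝ) : ℂ) * I by push_cast; ring, norm_exp_ofReal_mul_I]

@[simp]
theorem trigPolyBCF_apply (N : ℕ) (a : ℤ → ℂ) (x : ℝ) : trigPolyBCF N a x = trigPoly N a x := by
  simp [trigPolyBCF, trigPoly]

theorem hasDerivAt_trigPolyBCF (N : ℕ) {c : ℝ → ℤ → ℂ} {c' : ℤ → ℂ} {t : ℝ}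
    (hc : ∀ k, HasDerivAt (fun s => c s k) (c' k) t) :
    HasDerivAt (fun s => trigPolyBCF N (c s)) (trigPolyBCF N c') t :=
  HasDerivAt.fun_sum fun k _ => (hc k).smul_const _

theorem hasDerivAt_integral_energy (N n : ℕ) {l : ℤ → ℂ} (hl : ∀ k, l (-k) = l k)
    {c : ℝ → ℤ → ℂ} {c' : ℤ → ℂ} {t : ℝ} (hc : ∀ k, HasDerivAt (fun s => c s k) (c' k) t) :
    HasDerivAt (fun s => ∫ x in (-π)..π, trigPoly N (c s) x * trigPoly N (fun k => l k * c s k) x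
        - 2 * trigPoly N (c s) x ^ (n + 2) / ((n + 1) * (n + 2)))
      (2 * ∫ x in (-π)..π, trigPoly N c' x
        * (trigPoly N (fun k => l k * c t k) x - trigPoly N (c t) x ^ (n + 1) / (n + 1))) t := by
  have hU := hasDerivAt_trigPolyBCF N hc
  have hLU := hasDerivAt_trigPolyBCF N (c := fun s k => l k * c s k)
    fun k => (hc k).const_mul (l k)
  have hF := ((hU.mul hLU).sub ((hU.pow (n + 2)).const_smul
    ((2 : ℂ) / ((n + 1) * (n + 2))))).intervalIntegral_boundedContinuous (-π) π
  have hn1 : (n + 1 : ℂ) ≠ 0 := by exact_mod_cast n.succ_ne_zero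
  have hn2 : (n + 2 : ℂ) ≠ 0 := by exact_mod_cast (n + 1).succ_ne_zero
  refine (hF.congr_deriv ?_).congr_of_eventuallyEq (Filter.Eventually.of_forall fun s => ?_)
  · simp only [BoundedContinuousFunction.coe_sub, BoundedContinuousFunction.coe_add,
      BoundedContinuousFunction.coe_mul, BoundedContinuousFunction.coe_smul,
      BoundedContinuousFunction.coe_pow, BoundedContinuousFunction.coe_natCast, Pi.sub_apply,
      Pi.add_apply, Pi.mul_apply, Pi.pow_apply, Pi.natCast_apply, smul_eq_mul, trigPolyBCF_apply,
      Nat.add_succ_sub_one]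
    push_cast
    rw [← intervalIntegral.integral_const_mul, ← sub_eq_zero,
      ← intervalIntegral.integral_sub (Continuous.intervalIntegrable (by fun_prop) _ _)
        (Continuous.intervalIntegrable (by fun_prop) _ _),
      intervalIntegral.integral_congr (g := fun x : ℝ => trigPoly N (c t) x
        * trigPoly N (fun k => l k * c' k) x - trigPoly N c' x * trigPoly N (fun k => l k * c t k) x)
        fun x _ => by field_simp; ring,
      intervalIntegral.integral_sub (Continuous.intervalIntegrable (by fun_prop) _ _)
        (Continuous.intervalIntegrable (by fun_prop) _ _),
      integral_trigPoly_mul_multiplier_comm N hl, sub_self]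
  · refine intervalIntegral.integral_congr fun x _ => ?_
    simp only [Pi.sub_apply, Pi.mul_apply, Pi.smul_apply, Pi.pow_apply,
      BoundedContinuousFunction.coe_sub, BoundedContinuousFunction.coe_mul,
      BoundedContinuousFunction.coe_smul, BoundedContinuousFunction.coe_pow, trigPolyBCF_apply,
      smul_eq_mul]
    field_simp

theorem deriv_energy_eq_zero_of_weak (N n : ℕ) (l : ℤ → ℂ) (hl : ∀ k, l (-k) = l k)
    {c : ℝ → ℤ → ℂ} {t : ℝ} (hc : ∀ k, DifferentiableAt ℝ (fun s => c s k) t)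
    (hweak : ∀ d : ℤ → ℂ, (∀ k : ℤ, (N : ℤ) < |k| → d k = 0) →
      (∫ x in (-π)..π, deriv (fun s => trigPoly N (c s) x) t * conj (trigPoly N d x))
        + ∫ x in (-π)..π, (-trigPoly N (fun k => I * k * l k * c t k) x
            + deriv (fun y => trigPoly N (c t) y ^ (n + 1) / (n + 1)) x)
          * conj (trigPoly N d x) = 0) :
    deriv (fun s => ∫ x in (-π)..π, trigPoly N (c s) x * trigPoly N (fun k => l k * c s k) x
        - 2 * trigPoly N (c s) x ^ (n + 2) / ((n + 1) * (n + 2))) t = 0 := by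
  set c' := fun k => deriv (fun s => c s k) t
  set h : ℝ → ℂ := fun x =>
    trigPoly N (fun k => l k * c t k) x - trigPoly N (c t) x ^ (n + 1) / (n + 1) with h_def
  set h' : ℝ → ℂ := fun x => trigPoly N (fun k => I * k * (l k * c t k)) x
    - trigPoly N (c t) x ^ n * trigPoly N (fun k => I * k * c t k) x with h'_def
  have hh : ∀ x : ℝ, HasDerivAt h (h' x) x := fun x =>
    ((hasDerivAt_trigPoly N _ x).sub (hasDerivAt_trigPoly_pow_div N n (c t) x)).comp_ofReal
  have hh' : Continuous h' := by fun_prop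
  have hper : h (-π) = h π := by simp only [h_def, trigPoly_neg_pi]
  obtain ⟨d, hd, hconj⟩ := exists_conj_trigPoly_eq N (fourierCoeffPi h)
  have hw := hweak d hd
  simp only [fun x => (hasDerivAt_trigPoly_param N (fun k => (hc k).hasDerivAt) x).deriv,
    fun x => (hasDerivAt_trigPoly_pow_div N n (c t) x).deriv, hconj] at hw
  have hflux : ∫ x in (-π)..π, (-trigPoly N (fun k => I * k * l k * c t k) x
      + trigPoly N (c t) x ^ n * trigPoly N (fun k => I * k * c t k) x)
        * trigPoly N (fourierCoeffPi h) x = 0 := by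
    rw [← neg_eq_zero, ← intervalIntegral.integral_neg,
      ← integral_fourierProj_mul_deriv N hh hh' hper]
    refine intervalIntegral.integral_congr fun x _ => ?_
    simp only [h'_def, fourierProj, mul_assoc]
    ring
  have hcont : Continuous h := continuous_iff_continuousAt.2 fun x => (hh x).continuousAt
  rw [hflux, add_zero] at hw
  rw [(hasDerivAt_integral_energy N n hl fun k => (hc k).hasDerivAt).deriv]
  exact mul_eq_zero_of_right 2
    ((integral_trigPoly_mul_fourierProj N c' (hcont.intervalIntegrable _ _)).symm.trans hw)

theorem benjamin_semidiscrete_energy_conservation_general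
    (N q m : ℕ)
    (r δ γ : ℝ)
    (c : ℝ → ℤ → ℂ)
    (hdiff : ∀ k, Differentiable ℝ (fun t => c t k))
    (hweak : ∀ d : ℤ → ℂ, (∀ k : ℤ, (N : ℤ) < |k| → d k = 0) → ∀ t > (0 : ℝ),
      (∫ x in (-π : ℝ)..π,
          (deriv (fun s => ∑ k ∈ Finset.Icc (-(N : ℤ)) N,
              c s k * Complex.exp (Complex.I * k * x)) t)
            * starRingEnd ℂ (∑ k ∈ Finset.Icc (-(N : ℤ)) N,
                d k * Complex.exp (Complex.I * k * x)))
        + (∫ x in (-π : ℝ)..π,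
            (-(∑ k ∈ Finset.Icc (-(N : ℤ)) N,
                (Complex.I * k)
                  * ((δ * |(k : ℝ)| ^ (2 * m) - γ * |(k : ℝ)| ^ (2 * r) : ℝ) : ℂ)
                  * c t k * Complex.exp (Complex.I * k * x))
              + deriv (fun y => (∑ k ∈ Finset.Icc (-(N : ℤ)) N,
                  c t k * Complex.exp (Complex.I * k * y)) ^ (q + 1) / (q + 1)) x)
              * starRingEnd ℂ (∑ k ∈ Finset.Icc (-(N : ℤ)) N,
                  d k * Complex.exp (Complex.I * k * x))) = 0) :
    ∀ t > (0 : ℝ),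
      deriv (fun s => ∫ x in (-π : ℝ)..π,
        (∑ k ∈ Finset.Icc (-(N : ℤ)) N, c s k * Complex.exp (Complex.I * k * x))
          * (∑ k ∈ Finset.Icc (-(N : ℤ)) N,
              ((δ * |(k : ℝ)| ^ (2 * m) - γ * |(k : ℝ)| ^ (2 * r) : ℝ) : ℂ)
                * c s k * Complex.exp (Complex.I * k * x))
          - 2 * (∑ k ∈ Finset.Icc (-(N : ℤ)) N,
              c s k * Complex.exp (Complex.I * k * x)) ^ (q + 2) / ((q + 1) * (q + 2))) t
        = 0 := by
  simp only [← trigPoly.eq_1] at hweak ⊢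
  intro t ht
  exact deriv_energy_eq_zero_of_weak N q _ (fun k => by push_cast; rw [abs_neg])
    (fun k => hdiff k t) fun d hd => hweak d hd t ht

/-- L² conservation for the semidiscrete Fourier–Galerkin scheme for the
Benjamin-type equation `u_t - L u_x + f(u)_x = 0`, `f(u) = u^{q+1}/(q+1)`,
with symbol `l(k) = δ|k|^{2m} - γ|k|^{2r}`.  The approximation `u^N` is
represented by its Fourier coefficients `c t k`, `|k| ≤ N`. -/
theorem benjamin_semidiscrete_energy_conservation
    (N q m : ℕ) (hN : 1 ≤ N) (hq : 1 ≤ q) (hm : 1 ≤ m)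
    (r δ γ : ℝ) (hδ : 0 < δ) (hγ : 0 ≤ γ) (hr0 : 0 ≤ r) (hrm : r < m)
    (c : ℝ → ℤ → ℂ)
    (hdiff : ∀ k, Differentiable ℝ (fun t => c t k))
    (hsupp : ∀ t, ∀ k : ℤ, (N : ℤ) < |k| → c t k = 0)
    (hsym : ∀ t, ∀ k : ℤ, c t (-k) = starRingEnd ℂ (c t k))
    (hweak : ∀ d : ℤ → ℂ, (∀ k : ℤ, (N : ℤ) < |k| → d k = 0) → ∀ t > (0 : ℝ),
      (∫ x in (-π : ℝ)..π,
          (deriv (fun s => ∑ k ∈ Finset.Icc (-(N : ℤ)) N,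
              c s k * Complex.exp (Complex.I * k * x)) t)
            * starRingEnd ℂ (∑ k ∈ Finset.Icc (-(N : ℤ)) N,
                d k * Complex.exp (Complex.I * k * x)))
        + (∫ x in (-π : ℝ)..π,
            (-(∑ k ∈ Finset.Icc (-(N : ℤ)) N,
                (Complex.I * k)
                  * ((δ * |(k : ℝ)| ^ (2 * m) - γ * |(k : ℝ)| ^ (2 * r) : ℝ) : ℂ)
                  * c t k * Complex.exp (Complex.I * k * x))
              + deriv (fun y => (∑ k ∈ Finset.Icc (-(N : ℤ)) N,
                  c t k * Complex.exp (Complex.I * k * y)) ^ (q + 1) / (q + 1)) x)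
              * starRingEnd ℂ (∑ k ∈ Finset.Icc (-(N : ℤ)) N,
                  d k * Complex.exp (Complex.I * k * x))) = 0) :
    ∀ t > (0 : ℝ),
      deriv (fun s => ∫ x in (-π : ℝ)..π,
        (∑ k ∈ Finset.Icc (-(N : ℤ)) N, c s k * Complex.exp (Complex.I * k * x))
          * (∑ k ∈ Finset.Icc (-(N : ℤ)) N,
              ((δ * |(k : ℝ)| ^ (2 * m) - γ * |(k : ℝ)| ^ (2 * r) : ℝ) : ℂ)
                * c s k * Complex.exp (Complex.I * k * x))
          - 2 * (∑ k ∈ Finset.Icc (-(N : ℤ)) N,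
              c s k * Complex.exp (Complex.I * k * x)) ^ (q + 2) / ((q + 1) * (q + 2))) t
        = 0 :=
  benjamin_semidiscrete_energy_conservation_general N q m r δ γ c hdiff hweak
end
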